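/- For f_∞[z:w] = [w² + a z² : b w² + z²] on ℙ¹ with parameters a, b, the exceptional sets are X = {[1:b], [a:1]} and Y = f_∞²({[i:1],[i:−1],[1:−1]}) = {[(1+b)² + a(1+a)² : b(b+1)² + (1+a)²], [(b−1)² + a(1−a)² : b(b−1)² + (1−a)²]} (for R(z,w) = z² + 2zw + w²); for all (a,b) outside a proper algebraic subset of ℂ², the sets X and Y are disjoint and f_∞^{-1}(X ∪ Y) ∩ (X ∪ Y) = ∅. -/

import Mathlib

/-!
Two points of `ℙ¹` coincide exactly when the cross product of their homogeneous coordinates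
vanishes, and `f_∞` respects this relation because it is homogeneous. Hence, as soon as
`ab ≠ 1` (so that `f_∞` has no base point), `f_∞(P) ≠ Q` for two points `P, Q ∈ X ∪ Y` is
the non-vanishing of one polynomial in `(a, b)`, and so is `X ∩ Y = ∅`. The product of
these finitely many polynomials does not vanish at `(a, b) = (2, 3)`.
-/

/-- Equality of points of `ℙ¹` given in homogeneous coordinates: `[p₁:p₂] = [q₁:q₂]` iff
`p₁ q₂ = p₂ q₁`. -/
def projEq (p q : ℂ × ℂ) : Prop := p.1 * q.2 = p.2 * q.1

/-- The map `f_∞[z:w] = [w² + a z² : b w² + z²]` in homogeneous coordinates. -/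
def F17 (a b : ℂ) (p : ℂ × ℂ) : ℂ × ℂ :=
  (p.2 ^ 2 + a * p.1 ^ 2, b * p.2 ^ 2 + p.1 ^ 2)

section Projective

variable {p q r : ℂ × ℂ} {a b : ℂ}

theorem projEq_refl (p : ℂ × ℂ) : projEq p p := mul_comm _ _

theorem projEq_comm : projEq p q ↔ projEq q p := by
  simp only [projEq, mul_comm, eq_comm]

theorem projEq_trans (hq : q ≠ 0) (hpq : projEq p q) (hqr : projEq q r) : projEq p r := by
  unfold projEq at *
  by_contra hpr
  have h₁ : q.1 * (p.1 * r.2 - p.2 * r.1) = 0 := by linear_combination r.1 * hpq + p.1 * hqr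
  have h₂ : q.2 * (p.1 * r.2 - p.2 * r.1) = 0 := by linear_combination r.2 * hpq + p.2 * hqr
  have hcross : p.1 * r.2 - p.2 * r.1 ≠ 0 := sub_ne_zero.mpr hpr
  exact hq (Prod.ext ((mul_eq_zero.mp h₁).resolve_right hcross)
    ((mul_eq_zero.mp h₂).resolve_right hcross))

theorem projEq_F17 (a b : ℂ) (hpq : projEq p q) : projEq (F17 a b p) (F17 a b q) := by
  unfold projEq F17 at *
  linear_combination (a * b - 1) * (p.1 * q.2 + p.2 * q.1) * hpq

/-- The resultant of `w² + a z²` and `b w² + z²` is `(1 - ab)²`. -/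
theorem F17_ne_zero (hab : a * b ≠ 1) (hp : p ≠ 0) : F17 a b p ≠ 0 := by
  intro h
  obtain ⟨h₁, h₂⟩ := Prod.ext_iff.mp h
  simp only [F17, Prod.fst_zero, Prod.snd_zero] at h₁ h₂
  have h₃ : (1 - a * b) * p.1 ^ 2 = 0 := by linear_combination h₂ - b * h₁
  have hz : p.1 = 0 := pow_eq_zero_iff two_ne_zero |>.mp
    ((mul_eq_zero.mp h₃).resolve_left (sub_ne_zero.mpr hab.symm))
  have hw : p.2 = 0 := by
    rw [hz] at h₁
    exact pow_eq_zero_iff two_ne_zero |>.mp (by linear_combination h₁)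
  exact hp (Prod.ext hz hw)

theorem not_projEq_F17_of_projEq (hab : a * b ≠ 1) (hp : p ≠ 0) (hpq : projEq p q)
    (hq : ¬ projEq (F17 a b q) r) : ¬ projEq (F17 a b p) r := fun hpr =>
  hq (projEq_trans (F17_ne_zero hab hp) (projEq_comm.mp (projEq_F17 a b hpq)) hpr)

end Projective

section Exceptional

variable {R S : Type*} [CommRing R] [CommRing S]

def cross (p q : R × R) : R := p.1 * q.2 - p.2 * q.1

theorem projEq_iff_cross_eq_zero {p q : ℂ × ℂ} : projEq p q ↔ cross p q = 0 :=
  sub_eq_zero.symm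

/-- `F17` over an arbitrary commutative ring, so that it can be taken over `ℂ[a, b]`. -/
def quadMap (a b : R) (p : R × R) : R × R :=
  (p.2 ^ 2 + a * p.1 ^ 2, b * p.2 ^ 2 + p.1 ^ 2)

/-- `X = f_∞{[0:1], [1:0]}`. -/
def critValue (a b : R) : Fin 2 → R × R :=
  ![(1, b), (a, 1)]

/-- `Y = f_∞²{[i:1], [i:-1], [1:-1]}`. -/
def collisionValue (a b : R) : Fin 2 → R × R :=
  ![((1 + b) ^ 2 + a * (1 + a) ^ 2, b * (b + 1) ^ 2 + (1 + a) ^ 2),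
    ((b - 1) ^ 2 + a * (1 - a) ^ 2, b * (b - 1) ^ 2 + (1 - a) ^ 2)]

def exceptionalPoint (a b : R) : Fin 2 ⊕ Fin 2 → R × R :=
  Sum.elim (critValue a b) (collisionValue a b)

def genericity (a b : R) : R :=
  (1 - a * b) * (∏ i, ∏ j, cross (critValue a b i) (collisionValue a b j)) *
    ∏ i, ∏ j, cross (quadMap a b (exceptionalPoint a b i)) (exceptionalPoint a b j)

theorem map_cross (φ : R →+* S) (p q : R × R) :
    φ (cross p q) = cross (Prod.map φ φ p) (Prod.map φ φ q) := by
  simp [cross]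

theorem map_quadMap (φ : R →+* S) (a b : R) (p : R × R) :
    Prod.map φ φ (quadMap a b p) = quadMap (φ a) (φ b) (Prod.map φ φ p) := by
  simp [quadMap]

theorem map_critValue (φ : R →+* S) (a b : R) (i : Fin 2) :
    Prod.map φ φ (critValue a b i) = critValue (φ a) (φ b) i := by
  fin_cases i <;> simp [critValue]

theorem map_collisionValue (φ : R →+* S) (a b : R) (i : Fin 2) :
    Prod.map φ φ (collisionValue a b i) = collisionValue (φ a) (φ b) i := by
  fin_cases i <;> simp [collisionValue]

theorem map_exceptionalPoint (φ : R →+* S) (a b : R) (i : Fin 2 ⊕ Fin 2) :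
    Prod.map φ φ (exceptionalPoint a b i) = exceptionalPoint (φ a) (φ b) i := by
  cases i <;> simp [exceptionalPoint, map_critValue, map_collisionValue]

theorem map_genericity (φ : R →+* S) (a b : R) :
    φ (genericity a b) = genericity (φ a) (φ b) := by
  simp [genericity, map_cross, map_quadMap, map_critValue, map_collisionValue,
    map_exceptionalPoint]

end Exceptional

theorem F17_F17_one_neg_one (a b : ℂ) :
    F17 a b (F17 a b (1, -1)) = collisionValue a b 0 := by
  simp only [F17, collisionValue]
  norm_num
  ring_nf

theorem F17_F17_I_one (a b : ℂ) :
    F17 a b (F17 a b (Complex.I, 1)) = collisionValue a b 1 := by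
  ext <;> simp [F17, collisionValue] <;> ring

theorem F17_F17_I_neg_one (a b : ℂ) :
    F17 a b (F17 a b (Complex.I, -1)) = collisionValue a b 1 := by
  ext <;> simp [F17, collisionValue] <;> ring

theorem exists_projEq_exceptionalPoint_iff {a b : ℂ} {p : ℂ × ℂ} :
    (∃ i, projEq p (exceptionalPoint a b i)) ↔
      projEq p (1, b) ∨ projEq p (a, 1) ∨
        projEq p ((1 + b) ^ 2 + a * (1 + a) ^ 2, b * (b + 1) ^ 2 + (1 + a) ^ 2) ∨
        projEq p ((b - 1) ^ 2 + a * (1 - a) ^ 2, b * (b - 1) ^ 2 + (1 - a) ^ 2) := by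
  simp [exceptionalPoint, critValue, collisionValue, Fin.exists_fin_two, or_assoc]

structure IsGenericParam (a b : ℂ) : Prop where
  mul_ne_one : a * b ≠ 1
  critValue_ne_collisionValue : ∀ i j, ¬ projEq (critValue a b i) (collisionValue a b j)
  F17_ne_exceptionalPoint :
    ∀ i j, ¬ projEq (F17 a b (exceptionalPoint a b i)) (exceptionalPoint a b j)

theorem isGenericParam_of_genericity_ne_zero {a b : ℂ} (h : genericity a b ≠ 0) :
    IsGenericParam a b := by
  simp only [genericity, mul_ne_zero_iff, Finset.prod_ne_zero_iff, Finset.mem_univ,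
    forall_const] at h
  obtain ⟨⟨hab, hX⟩, hF⟩ := h
  exact ⟨fun h => hab (by rw [h, sub_self]),
    fun i j => (hX i j <| projEq_iff_cross_eq_zero.mp ·),
    fun i j => (hF i j <| projEq_iff_cross_eq_zero.mp ·)⟩

theorem genericity_two_three_ne_zero : genericity (2 : ℂ) 3 ≠ 0 := by
  simp [genericity, cross, quadMap, exceptionalPoint, critValue, collisionValue,
    Fin.prod_univ_two]
  norm_num

open MvPolynomial in
noncomputable def genericityPoly : MvPolynomial (Fin 2) ℂ :=
  genericity (X 0) (X 1)

theorem eval_genericityPoly (a b : ℂ) :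
    MvPolynomial.eval ![a, b] genericityPoly = genericity a b := by
  simp [genericityPoly, map_genericity]

theorem genericityPoly_ne_zero : genericityPoly ≠ 0 := fun h =>
  genericity_two_three_ne_zero (by rw [← eval_genericityPoly, h, map_zero])

/-- For `f_∞[z:w] = [w² + a z² : b w² + z²]` on `ℙ¹` (and `R(z,w) = z² + 2zw + w²`), the
exceptional sets are `X = {[1:b],[a:1]}` and
`Y = f_∞²({[i:1],[i:−1],[1:−1]}) = {[(1+b)²+a(1+a)² : b(b+1)²+(1+a)²],
[(b−1)²+a(1−a)² : b(b−1)²+(1−a)²]}`; for all `(a,b)` outside a proper algebraic subset of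
`ℂ²`, `X` and `Y` are disjoint and `f_∞⁻¹(X ∪ Y) ∩ (X ∪ Y) = ∅`. -/
theorem generic_degree_two_example :
    ∃ g : MvPolynomial (Fin 2) ℂ, g ≠ 0 ∧
      ∀ a b : ℂ, MvPolynomial.eval ![a, b] g ≠ 0 →
        -- Y = f_∞²(Y₋₂)
        (projEq (F17 a b (F17 a b (1, -1)))
          ((1 + b) ^ 2 + a * (1 + a) ^ 2, b * (b + 1) ^ 2 + (1 + a) ^ 2) ∧
        projEq (F17 a b (F17 a b (Complex.I, 1)))
          ((b - 1) ^ 2 + a * (1 - a) ^ 2, b * (b - 1) ^ 2 + (1 - a) ^ 2) ∧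
        projEq (F17 a b (F17 a b (Complex.I, -1)))
          ((b - 1) ^ 2 + a * (1 - a) ^ 2, b * (b - 1) ^ 2 + (1 - a) ^ 2)) ∧
        -- X ∩ Y = ∅
        (¬ projEq ((1 : ℂ), b)
            ((1 + b) ^ 2 + a * (1 + a) ^ 2, b * (b + 1) ^ 2 + (1 + a) ^ 2) ∧
        ¬ projEq ((1 : ℂ), b)
            ((b - 1) ^ 2 + a * (1 - a) ^ 2, b * (b - 1) ^ 2 + (1 - a) ^ 2) ∧
        ¬ projEq (a, (1 : ℂ))
            ((1 + b) ^ 2 + a * (1 + a) ^ 2, b * (b + 1) ^ 2 + (1 + a) ^ 2) ∧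
        ¬ projEq (a, (1 : ℂ))
            ((b - 1) ^ 2 + a * (1 - a) ^ 2, b * (b - 1) ^ 2 + (1 - a) ^ 2)) ∧
        -- f_∞⁻¹(X ∪ Y) ∩ (X ∪ Y) = ∅
        (∀ z w : ℂ, (z, w) ≠ (0, 0) →
          (projEq (z, w) ((1 : ℂ), b) ∨ projEq (z, w) (a, (1 : ℂ)) ∨
            projEq (z, w) ((1 + b) ^ 2 + a * (1 + a) ^ 2, b * (b + 1) ^ 2 + (1 + a) ^ 2) ∨
            projEq (z, w) ((b - 1) ^ 2 + a * (1 - a) ^ 2, b * (b - 1) ^ 2 + (1 - a) ^ 2)) →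
          ¬ (projEq (F17 a b (z, w)) ((1 : ℂ), b) ∨ projEq (F17 a b (z, w)) (a, (1 : ℂ)) ∨
            projEq (F17 a b (z, w))
              ((1 + b) ^ 2 + a * (1 + a) ^ 2, b * (b + 1) ^ 2 + (1 + a) ^ 2) ∨
            projEq (F17 a b (z, w))
              ((b - 1) ^ 2 + a * (1 - a) ^ 2, b * (b - 1) ^ 2 + (1 - a) ^ 2))) := by
  refine ⟨genericityPoly, genericityPoly_ne_zero, fun a b hg => ?_⟩
  rw [eval_genericityPoly] at hg
  have hgen := isGenericParam_of_genericity_ne_zero hg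
  refine ⟨⟨?_, ?_, ?_⟩, ?_, ?_⟩
  · rw [F17_F17_one_neg_one]; exact projEq_refl _
  · rw [F17_F17_I_one]; exact projEq_refl _
  · rw [F17_F17_I_neg_one]; exact projEq_refl _
  · exact ⟨hgen.critValue_ne_collisionValue 0 0, hgen.critValue_ne_collisionValue 0 1,
      hgen.critValue_ne_collisionValue 1 0, hgen.critValue_ne_collisionValue 1 1⟩
  · intro z w hzw hzw_mem hFzw_mem
    obtain ⟨i, hi⟩ := exists_projEq_exceptionalPoint_iff.mpr hzw_mem
    obtain ⟨j, hj⟩ := exists_projEq_exceptionalPoint_iff.mpr hFzw_mem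
    exact not_projEq_F17_of_projEq hgen.mul_ne_one hzw hi
      (hgen.F17_ne_exceptionalPoint i j) hj
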